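/- A group G admits a nonempty strongly aperiodic subshift of finite type (over some finite alphabet) if and only if there exist a finitely generated subgroup H ≤ G, a finite alphabet A, and a nonempty SFT Y ⊆ A^H such that for every g ∈ G with g ≠ 1 one has Cl(g) ∩ R_G(Free(Y)) ≠ ∅, i.e. there exist t ∈ G and an integer n > 0 with (t g t⁻¹)^n ∈ Free(Y). -/

import Mathlib

/-!
For `F ⊆ H`, a configuration lies in the `F`-SFT on `G` iff its restriction to every left coset
`s H` lies in the corresponding SFT `Y` on `H`. Hence a `g`-periodic point of the SFT on `G`
amounts to a choice, for each double coset `⟨g⟩ r H`, of a point of `Y` fixed by `H ∩ r⁻¹⟨g⟩r`.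
That cyclic group is trivial or generated by a positive power of `r⁻¹ g r`, so such points exist
unless some conjugate of `g` has a power in `Free(Y)`. With `H = ⟨F⟩` this gives the forward
direction; conversely, if `g • x = x` then `(t g t⁻¹)ⁿ` fixes the restriction of `t • x` to `H`.
-/

variable {G A : Type*}

/-- The left shift action of a group on configurations: `(shift g x) h = x (g⁻¹ * h)`. -/
def shift [Group G] (g : G) (x : G → A) : G → A := fun h => x (g⁻¹ * h)

/-- The subshift of finite type on `G` defined by the shape `F` and the pattern set `L`:
all configurations `x` such that for every `g`, the restriction of `g • x` to `F` lies in `L`. -/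
def SFT [Group G] (F : Set G) (L : Set (F → A)) : Set (G → A) :=
  {x | ∀ g : G, (fun f : F => shift g x f) ∈ L}

/-- The subshift of finite type on the subgroup `H` defined by the shape `F ⊆ H`
and the pattern set `L`. -/
def SFTon [Group G] (H : Subgroup G) (F : Set G) (hF : F ⊆ (H : Set G)) (L : Set (F → A)) :
    Set (↥H → A) :=
  {y | ∀ h : ↥H, (fun f : F => y (h⁻¹ * ⟨(f : G), hF f.2⟩)) ∈ L}

/-- The free part of a subshift: elements acting freely on every configuration. -/
def freePart [Group G] (X : Set (G → A)) : Set G := {g | ∀ x ∈ X, shift g x ≠ x}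

open Subgroup

section

variable [Group G]

theorem shift_one (x : G → A) : shift 1 x = x := by
  funext h; simp [shift]

theorem shift_mul (g₁ g₂ : G) (x : G → A) : shift (g₁ * g₂) x = shift g₁ (shift g₂ x) := by
  funext h; simp [shift, mul_assoc]

def shiftStabilizer (x : G → A) : Subgroup G where
  carrier := {g | shift g x = x}
  one_mem' := shift_one x
  mul_mem' {a b} (ha : shift a x = x) (hb : shift b x = x) := by
    show shift (a * b) x = x
    rw [shift_mul, hb, ha]
  inv_mem' {a} (ha : shift a x = x) := by
    show shift a⁻¹ x = x
    calc shift a⁻¹ x = shift a⁻¹ (shift a x) := by rw [ha]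
      _ = x := by rw [← shift_mul, inv_mul_cancel, shift_one]

theorem mem_shiftStabilizer {x : G → A} {g : G} : g ∈ shiftStabilizer x ↔ shift g x = x :=
  Iff.rfl

theorem conj_mem_shiftStabilizer_shift {x : G → A} {g : G} (hg : g ∈ shiftStabilizer x) (t : G) :
    t * g * t⁻¹ ∈ shiftStabilizer (shift t x) := by
  rw [mem_shiftStabilizer, ← shift_mul, inv_mul_cancel_right, shift_mul, hg]

theorem shift_restrict_of_mem_shiftStabilizer {H : Subgroup G} {x : G → A} {k : H}
    (hk : (k : G) ∈ shiftStabilizer x) : shift k (fun h : H => x h) = fun h : H => x h :=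
  funext fun h => congrFun hk h

section SFT

variable {F : Set G} {L : Set (F → A)} (H : Subgroup G) (hF : F ⊆ H)

theorem shift_mem_SFT {x : G → A} (hx : x ∈ SFT F L) (t : G) : shift t x ∈ SFT F L := fun g => by
  rw [← shift_mul]
  exact hx (g * t)

theorem shift_mem_SFTon {y : H → A} (hy : y ∈ SFTon H F hF L) (k : H) :
    shift k y ∈ SFTon H F hF L := fun h => by
  simpa [shift, mul_assoc] using hy (h * k)

theorem mem_SFT_iff_forall_mem_SFTon {x : G → A} :
    x ∈ SFT F L ↔ ∀ s : G, (fun h : H => x (s * h)) ∈ SFTon H F hF L := by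
  refine ⟨fun hx s h => ?_, fun hx g => by simpa [shift] using hx g⁻¹ 1⟩
  simpa [shift, mul_assoc] using hx (h * s⁻¹)

theorem restrict_mem_SFTon {x : G → A} (hx : x ∈ SFT F L) :
    (fun h : H => x h) ∈ SFTon H F hF L := by
  simpa only [one_mul] using (mem_SFT_iff_forall_mem_SFTon H hF).1 hx 1

end SFT

theorem exists_doubleCoset_rep (K H : Subgroup G) :
    ∃ rep : G → G, (∀ u, ∃ κ ∈ K, ∃ h ∈ H, u = κ * rep u * h) ∧
      ∀ u, ∀ κ ∈ K, ∀ h ∈ H, rep (κ * u * h) = rep u :=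
  ⟨fun u => (DoubleCoset.mk K H u).out,
    fun u => (DoubleCoset.eq K H _ u).1 (DoubleCoset.out_eq' K H _),
    fun u κ hκ h hh => congrArg Quotient.out ((DoubleCoset.eq K H u _).2 ⟨κ, hκ, h, hh, rfl⟩).symm⟩

variable {F : Set G} {L : Set (F → A)} {H : Subgroup G} {hF : F ⊆ H}

theorem exists_mem_SFT_le_shiftStabilizer (K : Subgroup G)
    (hY : ∀ t : G, ∃ y ∈ SFTon H F hF L,
      ∀ k : H, (k : G) ∈ K.map (MulAut.conj t).toMonoidHom → shift k y = y) :
    ∃ x ∈ SFT F L, K ≤ shiftStabilizer x := by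
  obtain ⟨rep, rep_spec, rep_eq⟩ := exists_doubleCoset_rep K H
  choose y hyY hyfix using hY
  have y_congr : ∀ r, ∀ κ ∈ K, ∀ κ' ∈ K, ∀ h h' : H, κ * r * h = κ' * r * h' →
      y r⁻¹ h = y r⁻¹ h' := by
    intro r κ hκ κ' hκ' h h' e
    have hk : ((h * h'⁻¹ : H) : G) ∈ K.map (MulAut.conj r⁻¹).toMonoidHom := by
      rw [mem_map_equiv]
      have : κ' = κ * r * h * (h' : G)⁻¹ * r⁻¹ := by rw [e]; group
      simpa [this, mul_assoc] using mul_mem (inv_mem hκ) hκ'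
    simpa [shift] using (congrFun (hyfix r⁻¹ _ hk) h).symm
  choose κ hκ h hh hu using rep_spec
  -- `x (κ * r * h) = y r⁻¹ h` on the double coset `K r H`; `y_congr` makes this well defined.
  let x : G → A := fun u => y (rep u)⁻¹ ⟨h u, hh u⟩
  have x_eq : ∀ u r, rep u = r → ∀ κ' ∈ K, ∀ h' : H, u = κ' * r * h' → x u = y r⁻¹ h' := by
    rintro u _ rfl κ' hκ' h' e
    exact y_congr _ _ (hκ u) _ hκ' _ _ ((hu u).symm.trans e)
  refine ⟨x, (mem_SFT_iff_forall_mem_SFTon H hF).2 fun s => ?_, fun κ₀ hκ₀ => ?_⟩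
  · have hxs : (fun h' : H => x (s * h')) = shift ⟨h s, hh s⟩⁻¹ (y (rep s)⁻¹) := by
      funext h'
      have hrep : rep (s * h') = rep s := by simpa using rep_eq s 1 K.one_mem h' h'.2
      have hdecomp : s * h' = κ s * rep s * (h s * h') := by
        conv_lhs => rw [hu s]
        group
      rw [x_eq (s * h') (rep s) hrep (κ s) (hκ s) (⟨h s, hh s⟩ * h') hdecomp]
      simp [shift]
    rw [hxs]
    exact shift_mem_SFTon H hF (hyY _) _
  · funext u
    show x (κ₀⁻¹ * u) = x u
    have hrep : rep (κ₀⁻¹ * u) = rep u := by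
      simpa using rep_eq u κ₀⁻¹ (inv_mem hκ₀) 1 H.one_mem
    have hdecomp : κ₀⁻¹ * u = κ₀⁻¹ * κ u * rep u * h u := by
      conv_lhs => rw [hu u]
      group
    exact x_eq _ _ hrep _ (mul_mem (inv_mem hκ₀) (hκ u)) ⟨h u, hh u⟩ hdecomp

theorem exists_mem_forall_mem_zpowers_shift_eq {Y : Set (H → A)} (hY : Y.Nonempty) {g : G}
    (hfix : ∀ n : ℕ, 0 < n → ∀ k : H, (k : G) = g ^ n → ∃ y ∈ Y, shift k y = y) :
    ∃ y ∈ Y, ∀ k : H, (k : G) ∈ zpowers g → shift k y = y := by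
  -- `H ∩ ⟨g⟩ = ⟨g ^ n⟩`, as a subgroup of a cyclic group.
  obtain ⟨n, hn⟩ := (le_zpowers_iff g (H ⊓ zpowers g)).1 inf_le_right
  have mem_zpowers_pow : ∀ k : H, (k : G) ∈ zpowers g → (k : G) ∈ zpowers (g ^ n) :=
    fun k hk => hn ▸ mem_inf.2 ⟨k.2, hk⟩
  rcases Nat.eq_zero_or_pos n with rfl | hpos
  · obtain ⟨y, hy⟩ := hY
    refine ⟨y, hy, fun k hk => ?_⟩
    have hk1 : k = 1 := by simpa using mem_zpowers_pow k hk
    rw [hk1, shift_one]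
  · have hgn : g ^ n ∈ H := (hn ▸ mem_zpowers (g ^ n) : g ^ n ∈ H ⊓ zpowers g).1
    obtain ⟨y, hy, hfix⟩ := hfix n hpos ⟨g ^ n, hgn⟩ rfl
    refine ⟨y, hy, fun k hk => ?_⟩
    have hle : zpowers (g ^ n) ≤ (shiftStabilizer y).map H.subtype :=
      zpowers_le.2 ⟨⟨g ^ n, hgn⟩, hfix, rfl⟩
    exact (mem_map_iff_mem H.subtype_injective).1 (hle (mem_zpowers_pow k hk))

theorem exists_mem_SFT_shift_eq_of_forall_notMem_freePart (hY : (SFTon H F hF L).Nonempty) (g : G)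
    (hg : ∀ t : G, ∀ n : ℕ, 0 < n → ∀ k : H, (k : G) = (t * g * t⁻¹) ^ n →
      k ∉ freePart (SFTon H F hF L)) :
    ∃ x ∈ SFT F L, shift g x = x := by
  obtain ⟨x, hx, hK⟩ := exists_mem_SFT_le_shiftStabilizer (zpowers g) fun t => by
    rw [MonoidHom.map_zpowers]
    refine exists_mem_forall_mem_zpowers_shift_eq hY fun n hn k hk => ?_
    simpa [freePart] using hg t n hn k hk
  exact ⟨x, hx, hK (mem_zpowers g)⟩

theorem SFT_nonempty_of_SFTon_nonempty (hY : (SFTon H F hF L).Nonempty) : (SFT F L).Nonempty := by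
  obtain ⟨y, hy⟩ := hY
  obtain ⟨x, hx, -⟩ := exists_mem_SFT_le_shiftStabilizer ⊥ fun _ => ⟨y, hy, fun k hk => by
    rw [Subgroup.map_bot, mem_bot, OneMemClass.coe_eq_one] at hk
    rw [hk, shift_one]⟩
  exact ⟨x, hx⟩

end

/-- A group `G` admits a nonempty strongly aperiodic SFT (over some finite
alphabet) iff there is a finitely generated subgroup `H ≤ G` and a nonempty SFT `Y` on `H`
(over some finite alphabet) such that every nontrivial `g ∈ G` has a conjugate with a positive
power lying in the free part of `Y`. -/
theorem exists_SA_SFT_iff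
    {G : Type*} [Group G] :
    (∃ (A : Type) (_ : Finite A) (F : Set G) (_ : F.Finite) (L : Set (F → A)),
        (SFT F L).Nonempty ∧ ∀ x ∈ SFT F L, ∀ g : G, shift g x = x → g = 1) ↔
    (∃ (H : Subgroup G), H.FG ∧
      ∃ (A : Type) (_ : Finite A) (F : Set G) (_ : F.Finite) (hF : F ⊆ (H : Set G))
        (L : Set (F → A)),
        (SFTon H F hF L).Nonempty ∧
        ∀ g : G, g ≠ 1 → ∃ t : G, ∃ n : ℕ, 0 < n ∧
          ∃ k : ↥H, (k : G) = (t * g * t⁻¹) ^ n ∧ k ∈ freePart (SFTon H F hF L)) := by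
  constructor
  · rintro ⟨A, hA, F, hFfin, L, ⟨x₀, hx₀⟩, hSA⟩
    have hF : F ⊆ closure F := subset_closure
    have hY : (SFTon _ F hF L).Nonempty := ⟨_, restrict_mem_SFTon _ hF hx₀⟩
    refine ⟨closure F, (fg_iff _).2 ⟨F, rfl, hFfin⟩, A, hA, F, hFfin, hF, L, hY, fun g hg => ?_⟩
    by_contra! hcon
    obtain ⟨x, hx, hgx⟩ := exists_mem_SFT_shift_eq_of_forall_notMem_freePart hY g hcon
    exact hg (hSA x hx g hgx)
  · rintro ⟨H, -, A, hA, F, hFfin, hF, L, hY, hfree⟩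
    refine ⟨A, hA, F, hFfin, L, SFT_nonempty_of_SFTon_nonempty hY, fun x hx g hgx => ?_⟩
    by_contra hg
    obtain ⟨t, n, -, k, hk, hkfree⟩ := hfree g hg
    have hkx : (k : G) ∈ shiftStabilizer (shift t x) :=
      hk ▸ pow_mem (conj_mem_shiftStabilizer_shift hgx t) n
    exact hkfree _ (restrict_mem_SFTon H hF (shift_mem_SFT hx t))
      (shift_restrict_of_mem_shiftStabilizer hkx)
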